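/- Let α ∈ (0, 1), and let g, h, v : ℕ → ℝ be real sequences with v₀ > 0 and v_t = α·v_{t−1} + (1 − α)·g_t² for all t ≥ 1, and let M ≥ 0 satisfy |g_t·h_t| ≤ M·v_{t−1}^{3/2} for all t ≥ 1. Let (ε_t)_{t≥1} be positive, decreasing step sizes and S_T = ∑_{t=1}^{T} ε_t. Then for every T ≥ 1, |∑_{t=1}^{T} (ε_t/S_T)·(1 − α)·g_t·h_t / v_t^{3/2}| ≤ (ε₁/ε_T)·M·(1 − α)/α^{3/2}. -/
import Mathlib


open Finset

/-- The weighted accumulated pSGLD correction term satisfies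
`|∑_{t=1}^{T} (ε_t/S_T)(1 − α) g_t h_t / v_t^{3/2}| ≤ (ε₁/ε_T) M (1 − α)/α^{3/2}`. -/
theorem abs_weighted_sum_correction_le (α : ℝ) (hα : α ∈ Set.Ioo (0 : ℝ) 1)
    (g h v : ℕ → ℝ) (hv0 : 0 < v 0)
    (hv : ∀ t : ℕ, 1 ≤ t → v t = α * v (t - 1) + (1 - α) * (g t) ^ 2)
    (M : ℝ) (hM : 0 ≤ M)
    (hbound : ∀ t : ℕ, 1 ≤ t → |g t * h t| ≤ M * (v (t - 1)) ^ ((3 : ℝ) / 2))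
    (ε : ℕ → ℝ) (hpos : ∀ t : ℕ, 1 ≤ t → 0 < ε t)
    (hdec : ∀ t : ℕ, 1 ≤ t → ε (t + 1) ≤ ε t) :
    ∀ T : ℕ, 1 ≤ T →
      |∑ t ∈ Icc 1 T, (ε t / ∑ s ∈ Icc 1 T, ε s) * ((1 - α) * g t * h t / (v t) ^ ((3 : ℝ) / 2))|
        ≤ (ε 1 / ε T) * M * (1 - α) / α ^ ((3 : ℝ) / 2) := by
  obtain ⟨hα0, hα1⟩ := hα
  -- positivity of v
  have hvpos : ∀ t, 0 < v t := by
    intro t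
    induction t with
    | zero => exact hv0
    | succ n ih =>
      rw [hv (n + 1) (Nat.le_add_left 1 n)]
      simp only [Nat.add_sub_cancel]
      have h1a : (0:ℝ) ≤ 1 - α := by linarith
      have : 0 ≤ (1 - α) * g (n + 1) ^ 2 := mul_nonneg h1a (sq_nonneg _)
      nlinarith
  have hαr : (0:ℝ) < α ^ ((3:ℝ)/2) := Real.rpow_pos_of_pos hα0 _
  -- key lower bound on v t
  have hkey : ∀ t, 1 ≤ t → α ^ ((3:ℝ)/2) * (v (t-1)) ^ ((3:ℝ)/2) ≤ (v t) ^ ((3:ℝ)/2) := by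
    intro t ht
    have h1 : α * v (t-1) ≤ v t := by
      rw [hv t ht]
      have h1a : (0:ℝ) ≤ 1 - α := by linarith
      have : 0 ≤ (1 - α) * g t ^ 2 := mul_nonneg h1a (sq_nonneg _)
      linarith
    calc α ^ ((3:ℝ)/2) * (v (t-1)) ^ ((3:ℝ)/2)
        = (α * v (t-1)) ^ ((3:ℝ)/2) := (Real.mul_rpow hα0.le (hvpos _).le).symm
      _ ≤ (v t) ^ ((3:ℝ)/2) :=
          Real.rpow_le_rpow (mul_nonneg hα0.le (hvpos _).le) h1 (by norm_num)
  -- per-term bound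
  have hterm : ∀ t, 1 ≤ t →
      |(1 - α) * g t * h t / (v t) ^ ((3:ℝ)/2)| ≤ M * (1 - α) / α ^ ((3:ℝ)/2) := by
    intro t ht
    have hvt : (0:ℝ) < (v t) ^ ((3:ℝ)/2) := Real.rpow_pos_of_pos (hvpos t) _
    have hvt1 : (0:ℝ) < (v (t-1)) ^ ((3:ℝ)/2) := Real.rpow_pos_of_pos (hvpos _) _
    rw [abs_div, abs_of_pos hvt, div_le_div_iff₀ hvt hαr]
    have h1 : |(1 - α) * g t * h t| = (1 - α) * |g t * h t| := by
      rw [mul_assoc, abs_mul, abs_of_pos (by linarith)]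
    rw [h1]
    calc (1 - α) * |g t * h t| * α ^ ((3:ℝ)/2)
        ≤ (1 - α) * (M * (v (t-1)) ^ ((3:ℝ)/2)) * α ^ ((3:ℝ)/2) := by
          exact mul_le_mul_of_nonneg_right
            (mul_le_mul_of_nonneg_left (hbound t ht) (by linarith)) hαr.le
      _ = M * (1 - α) * (α ^ ((3:ℝ)/2) * (v (t-1)) ^ ((3:ℝ)/2)) := by ring
      _ ≤ M * (1 - α) * (v t) ^ ((3:ℝ)/2) := by
          have := hkey t ht
          have hM1 : 0 ≤ M * (1 - α) := by nlinarith
          nlinarith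
  intro T hT
  set S := ∑ s ∈ Icc 1 T, ε s with hS
  have hSpos : 0 < S := by
    apply Finset.sum_pos
    · intro i hi; exact hpos i (Finset.mem_Icc.mp hi).1
    · exact ⟨1, Finset.mem_Icc.mpr ⟨le_refl 1, hT⟩⟩
  have hεT : 0 < ε T := hpos T hT
  have hC : (0:ℝ) ≤ M * (1 - α) / α ^ ((3:ℝ)/2) := by
    apply div_nonneg _ hαr.le; nlinarith
  -- ε is antitone on [1, ∞)
  have hmono : ∀ n : ℕ, 1 ≤ n → ε n ≤ ε 1 := by
    intro n hn
    induction n with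
    | zero => omega
    | succ k ih =>
      rcases Nat.eq_zero_or_pos k with h | hk
      · subst h; exact le_rfl
      · exact le_trans (hdec k hk) (ih hk)
  have hε1T : ε T ≤ ε 1 := hmono T hT
  have hratio : (1:ℝ) ≤ ε 1 / ε T := (one_le_div hεT).mpr hε1T
  calc |∑ t ∈ Icc 1 T, (ε t / S) * ((1 - α) * g t * h t / (v t) ^ ((3:ℝ)/2))|
      ≤ ∑ t ∈ Icc 1 T, |(ε t / S) * ((1 - α) * g t * h t / (v t) ^ ((3:ℝ)/2))| :=
        Finset.abs_sum_le_sum_abs _ _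
    _ ≤ ∑ t ∈ Icc 1 T, (ε t / S) * (M * (1 - α) / α ^ ((3:ℝ)/2)) := by
        apply Finset.sum_le_sum
        intro i hi
        have hi1 := (Finset.mem_Icc.mp hi).1
        have hεi : 0 < ε i := hpos i hi1
        rw [abs_mul, abs_of_pos (div_pos hεi hSpos)]
        exact mul_le_mul_of_nonneg_left (hterm i hi1) (div_pos hεi hSpos).le
    _ = (∑ t ∈ Icc 1 T, ε t / S) * (M * (1 - α) / α ^ ((3:ℝ)/2)) := by
        rw [Finset.sum_mul]
    _ = 1 * (M * (1 - α) / α ^ ((3:ℝ)/2)) := by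
        rw [← Finset.sum_div, ← hS, div_self hSpos.ne']
    _ ≤ (ε 1 / ε T) * (M * (1 - α) / α ^ ((3:ℝ)/2)) :=
        mul_le_mul_of_nonneg_right hratio hC
    _ = (ε 1 / ε T) * M * (1 - α) / α ^ ((3:ℝ)/2) := by ring
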